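/- For 0 < a < b, the integral harmonic mean satisfies (8(1−ln 2)/3)·A(a,b) < I_H(a,b) < A(a,b), where I_H(a,b) = (2/(b−a)²)·∫ₐᵇ∫ₐᵇ xy/(x+y) dx dy and A(a,b) = (a+b)/2. -/

import Mathlib

/-!
Upper bound: `xy/(x+y) ≤ (x+y)/4`, strictly off the diagonal, and integrating `(x+y)/4` over the
square gives `(b-a)² A(a,b) / 2`.

Lower bound: the parallel sum `x ∥ y = xy/(x+y)` is concave and positively homogeneous, hence
superadditive. Writing `x = a + u`, `y = a + v` gives `x ∥ y ≥ a ∥ a + u ∥ v = a/2 + u ∥ v`, and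
`∫∫_{[0,c]²} u ∥ v = 2(1 - log 2) c³ / 3` is computed in closed form. The resulting bound is sharp
as `a → 0`; for `a > 0` the term `a/2` beats its share `(8(1 - log 2)/3) a/2` of the claimed bound
because `log 2 > 5/8`.
-/

open intervalIntegral Real Set Function

theorem continuousOn_parametric_intervalIntegral_of_continuousOn {X E : Type*}
    [TopologicalSpace X] [NormedAddCommGroup E] [NormedSpace ℝ E] {f : X → ℝ → E}
    {s : Set X} {a b : ℝ} (hab : a ≤ b) (hf : ContinuousOn (uncurry f) (s ×ˢ Icc a b)) :
    ContinuousOn (fun x => ∫ y in a..b, f x y) s := by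
  rw [continuousOn_iff_continuous_domRestrict]
  -- clamping `y` into `[a, b]` extends `f` continuously without changing the integrals
  have hc : Continuous (uncurry fun (x : s) y => f x (projIcc a b hab y)) :=
    hf.comp_continuous (f := fun p : s × ℝ => ((p.1 : X), (projIcc a b hab p.2 : ℝ)))
      (by fun_prop) fun p => ⟨p.1.2, (projIcc a b hab p.2).2⟩
  refine (continuous_parametric_intervalIntegral_of_continuous' hc a b).congr fun x =>
    integral_congr fun y hy => ?_
  rw [uIcc_of_le hab] at hy
  simp [projIcc_of_mem hab hy]

section DoubleIntegral

variable {f g : ℝ → ℝ → ℝ} {a b c d : ℝ}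

theorem intervalIntegrable_integral_of_continuousOn (hab : a ≤ b) (hcd : c ≤ d)
    (hf : ContinuousOn (uncurry f) (Icc a b ×ˢ Icc c d)) :
    IntervalIntegrable (fun x => ∫ y in c..d, f x y) MeasureTheory.volume a b :=
  (continuousOn_parametric_intervalIntegral_of_continuousOn hcd hf).intervalIntegrable_of_Icc hab

theorem integral_integral_mono_on (hab : a ≤ b) (hcd : c ≤ d)
    (hf : ContinuousOn (uncurry f) (Icc a b ×ˢ Icc c d))
    (hg : ContinuousOn (uncurry g) (Icc a b ×ˢ Icc c d))
    (hfg : ∀ x ∈ Icc a b, ∀ y ∈ Icc c d, f x y ≤ g x y) :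
    ∫ x in a..b, ∫ y in c..d, f x y ≤ ∫ x in a..b, ∫ y in c..d, g x y :=
  integral_mono_on hab (intervalIntegrable_integral_of_continuousOn hab hcd hf)
    (intervalIntegrable_integral_of_continuousOn hab hcd hg)
    fun x hx => integral_mono_on hcd ((hf.uncurry_left x hx).intervalIntegrable_of_Icc hcd)
      ((hg.uncurry_left x hx).intervalIntegrable_of_Icc hcd) (hfg x hx)

theorem integral_integral_lt_integral_integral (hab : a < b) (hcd : c < d)
    (hf : ContinuousOn (uncurry f) (Icc a b ×ˢ Icc c d))
    (hg : ContinuousOn (uncurry g) (Icc a b ×ˢ Icc c d))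
    (hfg : ∀ x ∈ Icc a b, ∀ y ∈ Icc c d, f x y ≤ g x y)
    (hlt : ∃ x ∈ Icc a b, ∃ y ∈ Icc c d, f x y < g x y) :
    ∫ x in a..b, ∫ y in c..d, f x y < ∫ x in a..b, ∫ y in c..d, g x y := by
  obtain ⟨x₀, hx₀, y₀, hy₀, hlt₀⟩ := hlt
  refine integral_lt_integral_of_continuousOn_of_le_of_exists_lt hab
    (continuousOn_parametric_intervalIntegral_of_continuousOn hcd.le hf)
    (continuousOn_parametric_intervalIntegral_of_continuousOn hcd.le hg)
    (fun x hx => ?_) ⟨x₀, hx₀, ?_⟩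
  · have hx := Ioc_subset_Icc_self hx
    exact integral_mono_on hcd.le ((hf.uncurry_left x hx).intervalIntegrable_of_Icc hcd.le)
      ((hg.uncurry_left x hx).intervalIntegrable_of_Icc hcd.le) (hfg x hx)
  · exact integral_lt_integral_of_continuousOn_of_le_of_exists_lt hcd
      (hf.uncurry_left x₀ hx₀) (hg.uncurry_left x₀ hx₀)
      (fun y hy => hfg x₀ hx₀ y (Ioc_subset_Icc_self hy)) ⟨y₀, hy₀, hlt₀⟩

theorem integral_integral_const_add (hab : a ≤ b) (hcd : c ≤ d)
    (hf : ContinuousOn (uncurry f) (Icc a b ×ˢ Icc c d)) (k : ℝ) :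
    ∫ x in a..b, ∫ y in c..d, (k + f x y) =
      (b - a) * (d - c) * k + ∫ x in a..b, ∫ y in c..d, f x y := by
  rw [integral_congr (g := fun x => (d - c) * k + ∫ y in c..d, f x y) fun x hx => ?_,
    integral_add intervalIntegrable_const (intervalIntegrable_integral_of_continuousOn hab hcd hf)]
  · simp only [integral_const, smul_eq_mul]
    ring
  · rw [uIcc_of_le hab] at hx
    simp only [integral_add intervalIntegrable_const
      ((hf.uncurry_left x hx).intervalIntegrable_of_Icc hcd), integral_const, smul_eq_mul]

theorem integral_integral_eq_integral_integral_add_right (f : ℝ → ℝ → ℝ) (a b : ℝ) :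
    ∫ x in a..b, ∫ y in a..b, f x y =
      ∫ u in 0..b - a, ∫ v in 0..b - a, f (u + a) (v + a) := by
  rw [integral_comp_add_right (fun u => ∫ v in 0..b - a, f u (v + a))]
  simp only [integral_comp_add_right (f _), zero_add, sub_add_cancel]

end DoubleIntegral

theorem integral_pow_mul_log {c : ℝ} (hc : 0 ≤ c) (n : ℕ) :
    ∫ u in 0..c, u ^ n * log u = c ^ (n + 1) / (n + 1) * log c - c ^ (n + 1) / (n + 1) ^ 2 := by
  have hderiv : ∀ u ∈ Ioo 0 c, HasDerivAt
      (fun u : ℝ => u ^ (n + 1) / (n + 1) * log u - u ^ (n + 1) / (n + 1) ^ 2)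
      (u ^ n * log u) u := by
    intro u hu
    have hu0 : u ≠ 0 := hu.1.ne'
    refine ((((hasDerivAt_pow (n + 1) u).div_const ((n : ℝ) + 1)).mul
      (hasDerivAt_log hu0)).sub
      ((hasDerivAt_pow (n + 1) u).div_const (((n : ℝ) + 1) ^ 2))).congr_deriv ?_
    simp only [Nat.add_sub_cancel, Nat.cast_add, Nat.cast_one]
    field_simp
    ring
  -- `u ^ (n + 1) * log u = u ^ n * (u * log u)` extends continuously to `u = 0`
  have hcont : ContinuousOn
      (fun u : ℝ => u ^ (n + 1) / (n + 1) * log u - u ^ (n + 1) / (n + 1) ^ 2) (Icc 0 c) := by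
    have := continuous_mul_log
    exact ContinuousOn.congr
      (f := fun u : ℝ => u ^ n * (u * log u) / (n + 1) - u ^ (n + 1) / (n + 1) ^ 2)
      (by fun_prop) fun u _ => by ring
  rw [integral_eq_sub_of_hasDerivAt_of_le hc hcont hderiv
    (intervalIntegrable_log'.continuousOn_mul (by fun_prop))]
  simp

theorem intervalIntegrable_sq_mul_log_add (a b c : ℝ) :
    IntervalIntegrable (fun u => u ^ 2 * log (u + c)) MeasureTheory.volume a b :=
  ((IntervalIntegrable.comp_add_right_iff (f := log)).2 intervalIntegrable_log').continuousOn_mul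
    (by fun_prop)

theorem integral_sq_mul_log_add_self {c : ℝ} (hc : 0 < c) :
    ∫ u in 0..c, u ^ 2 * log (u + c) =
      2 * c ^ 3 / 3 * log (2 * c) - c ^ 3 / 3 * log c - 5 * c ^ 3 / 18 := by
  have hderiv : ∀ u ∈ uIcc 0 c, HasDerivAt
      (fun u : ℝ => (u ^ 3 + c ^ 3) / 3 * log (u + c) - u ^ 3 / 9 + c * u ^ 2 / 6 - c ^ 2 * u / 3)
      (u ^ 2 * log (u + c)) u := by
    intro u hu
    have hu : 0 < u + c := by rw [uIcc_of_le hc.le] at hu; linarith [hu.1]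
    have hlog := ((hasDerivAt_id u).add_const c).log hu.ne'
    refine (((((hasDerivAt_pow 3 u).add_const (c ^ 3)).div_const 3).mul hlog).sub
      ((hasDerivAt_pow 3 u).div_const 9) |>.add (((hasDerivAt_pow 2 u).const_mul c).div_const 6)
      |>.sub (((hasDerivAt_id u).const_mul (c ^ 2)).div_const 3)).congr_deriv ?_
    simp only [id]
    field_simp
    ring
  rw [integral_eq_sub_of_hasDerivAt hderiv (intervalIntegrable_sq_mul_log_add 0 c c),
    show c + c = 2 * c by ring]
  simp
  ring

/-- Half the harmonic mean: `H x y = 2 * parallelSum x y`. -/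
noncomputable def parallelSum (x y : ℝ) : ℝ := x * y / (x + y)

theorem parallelSum_self (x : ℝ) : parallelSum x x = x / 2 := by
  unfold parallelSum
  rcases eq_or_ne x 0 with rfl | hx
  · simp
  · field_simp; ring

section Nonneg

variable {x y : ℝ} (hx : 0 ≤ x) (hy : 0 ≤ y)
include hx hy

theorem parallelSum_nonneg : 0 ≤ parallelSum x y := by
  unfold parallelSum; positivity

theorem parallelSum_le_left : parallelSum x y ≤ x := by
  unfold parallelSum
  rcases (add_nonneg hx hy).eq_or_lt with hxy | hxy
  · rw [← hxy, div_zero]; exact hx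
  · rw [div_le_iff₀ hxy]; nlinarith

theorem parallelSum_lt_add_div_four (hxy : x ≠ y) : parallelSum x y < (x + y) / 4 := by
  have hpos : 0 < x + y := by
    rcases hx.eq_or_lt with rfl | hx
    · simpa using lt_of_le_of_ne hy hxy
    · linarith
  rw [parallelSum, div_lt_div_iff₀ hpos four_pos]
  nlinarith [mul_self_pos.mpr (sub_ne_zero.2 hxy)]

theorem parallelSum_le_add_div_four : parallelSum x y ≤ (x + y) / 4 := by
  rcases eq_or_ne x y with rfl | hxy
  · rw [parallelSum_self]; linarith
  · exact (parallelSum_lt_add_div_four hx hy hxy).le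

end Nonneg

theorem parallelSum_add_parallelSum_le {p q r s : ℝ} (hp : 0 ≤ p) (hq : 0 ≤ q) (hr : 0 ≤ r)
    (hs : 0 ≤ s) : parallelSum p q + parallelSum r s ≤ parallelSum (p + r) (q + s) := by
  unfold parallelSum
  rcases (add_nonneg hp hq).eq_or_lt with hpq | hpq
  · obtain ⟨rfl, rfl⟩ : p = 0 ∧ q = 0 := by constructor <;> linarith
    simp
  rcases (add_nonneg hr hs).eq_or_lt with hrs | hrs
  · obtain ⟨rfl, rfl⟩ : r = 0 ∧ s = 0 := by constructor <;> linarith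
    simp
  rw [div_add_div _ _ hpq.ne' hrs.ne', div_le_div_iff₀ (by positivity) (by linarith)]
  nlinarith [mul_nonneg (mul_nonneg hpq.le hrs.le) (sq_nonneg (p * s - q * r))]

theorem continuousOn_parallelSum : ContinuousOn (uncurry parallelSum) (Ici 0 ×ˢ Ici 0) := by
  rintro ⟨x, y⟩ ⟨hx : 0 ≤ x, hy : 0 ≤ y⟩
  rcases (add_nonneg hx hy).eq_or_lt with hxy | hxy
  · obtain ⟨rfl, rfl⟩ : x = 0 ∧ y = 0 := by constructor <;> linarith
    rw [ContinuousWithinAt, show uncurry parallelSum (0, 0) = 0 by simp [parallelSum]]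
    refine squeeze_zero' ?_ ?_ (continuousWithinAt_fst (p := ((0 : ℝ), (0 : ℝ))))
    · exact eventually_nhdsWithin_of_forall fun p hp => parallelSum_nonneg hp.1 hp.2
    · exact eventually_nhdsWithin_of_forall fun p hp => parallelSum_le_left hp.1 hp.2
  · refine ContinuousAt.continuousWithinAt (f := fun p : ℝ × ℝ => p.1 * p.2 / (p.1 + p.2)) ?_
    exact ContinuousAt.div (by fun_prop) (by fun_prop) hxy.ne'

theorem integral_parallelSum_zero_right {u c : ℝ} (hu : 0 ≤ u) (hc : 0 ≤ c) :
    ∫ v in 0..c, parallelSum u v = u * c - u ^ 2 * (log (u + c) - log u) := by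
  rcases hu.eq_or_lt with rfl | hu
  · simp [parallelSum]
  have hderiv : ∀ v ∈ uIcc 0 c,
      HasDerivAt (fun v => u * v - u ^ 2 * log (u + v)) (parallelSum u v) v := by
    intro v hv
    have hv : 0 < u + v := by rw [uIcc_of_le hc] at hv; linarith [hv.1]
    refine (((hasDerivAt_id v).const_mul u).sub
      (((hasDerivAt_id v).const_add u).log hv.ne' |>.const_mul (u ^ 2))).congr_deriv ?_
    simp only [parallelSum, id]
    field_simp
    ring
  rw [integral_eq_sub_of_hasDerivAt hderiv (ContinuousOn.intervalIntegrable ?_)]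
  · simp
    ring
  · rw [uIcc_of_le hc]
    exact ContinuousOn.div (by fun_prop) (by fun_prop) fun v hv => by linarith [hv.1]

theorem integral_integral_parallelSum {c : ℝ} (hc : 0 < c) :
    ∫ u in 0..c, ∫ v in 0..c, parallelSum u v = 2 / 3 * (1 - log 2) * c ^ 3 := by
  have hinner : EqOn (fun u => ∫ v in 0..c, parallelSum u v)
      (fun u => (u * c - u ^ 2 * log (u + c)) + u ^ 2 * log u) (uIcc 0 c) := by
    intro u hu
    rw [uIcc_of_le hc.le] at hu
    simp only [integral_parallelSum_zero_right hu.1 hc.le]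
    ring
  have hlin : IntervalIntegrable (fun u => u * c) MeasureTheory.volume 0 c :=
    Continuous.intervalIntegrable (by fun_prop) 0 c
  rw [integral_congr hinner, integral_add (hlin.sub (intervalIntegrable_sq_mul_log_add 0 c c))
    (intervalIntegrable_log'.continuousOn_mul (by fun_prop)),
    integral_sub hlin (intervalIntegrable_sq_mul_log_add 0 c c), integral_pow_mul_log hc.le,
    integral_sq_mul_log_add_self hc, log_mul two_ne_zero hc.ne']
  simp
  ring

section Interval

variable {a b : ℝ} (ha : 0 ≤ a) (hab : a < b)
include ha hab

theorem integral_integral_parallelSum_lt :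
    ∫ x in a..b, ∫ y in a..b, parallelSum x y < (b - a) ^ 2 * (a + b) / 4 := by
  have hsub : Icc a b ×ˢ Icc a b ⊆ Ici 0 ×ˢ Ici 0 :=
    fun p hp => ⟨ha.trans hp.1.1, ha.trans hp.2.1⟩
  calc ∫ x in a..b, ∫ y in a..b, parallelSum x y
      < ∫ x in a..b, ∫ y in a..b, (x + y) / 4 :=
        integral_integral_lt_integral_integral hab hab (continuousOn_parallelSum.mono hsub)
          (by fun_prop)
          (fun x hx y hy => parallelSum_le_add_div_four (ha.trans hx.1) (ha.trans hy.1))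
          ⟨a, left_mem_Icc.2 hab.le, b, right_mem_Icc.2 hab.le,
            parallelSum_lt_add_div_four ha (ha.trans hab.le) hab.ne⟩
    _ = (b - a) ^ 2 * (a + b) / 4 := by
      simp only [integral_div, integral_comp_add_left (fun y => y), integral_id]
      rw [integral_sub (Continuous.intervalIntegrable (by fun_prop) _ _)
        (Continuous.intervalIntegrable (by fun_prop) _ _)]
      simp only [integral_comp_add_right (fun x => x ^ 2), integral_pow]
      ring

theorem le_integral_integral_parallelSum :
    a / 2 * (b - a) ^ 2 + 2 / 3 * (1 - log 2) * (b - a) ^ 3 ≤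
      ∫ x in a..b, ∫ y in a..b, parallelSum x y := by
  have hc : 0 < b - a := sub_pos.2 hab
  have hcont : ContinuousOn (uncurry parallelSum) (Icc 0 (b - a) ×ˢ Icc 0 (b - a)) :=
    continuousOn_parallelSum.mono (prod_mono Icc_subset_Ici_self Icc_subset_Ici_self)
  have hshift : ContinuousOn (uncurry fun u v => parallelSum (u + a) (v + a))
      (Icc 0 (b - a) ×ˢ Icc 0 (b - a)) :=
    continuousOn_parallelSum.comp
      (by fun_prop : Continuous fun p : ℝ × ℝ => (p.1 + a, p.2 + a)).continuousOn
      fun p hp => ⟨add_nonneg hp.1.1 ha, add_nonneg hp.2.1 ha⟩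
  calc a / 2 * (b - a) ^ 2 + 2 / 3 * (1 - log 2) * (b - a) ^ 3
      = ∫ u in 0..b - a, ∫ v in 0..b - a, (a / 2 + parallelSum u v) := by
        rw [integral_integral_const_add hc.le hc.le hcont, integral_integral_parallelSum hc]
        ring
    _ ≤ ∫ u in 0..b - a, ∫ v in 0..b - a, parallelSum (u + a) (v + a) := by
        refine integral_integral_mono_on hc.le hc.le (continuousOn_const.add hcont) hshift
          fun u hu v hv => ?_
        have := parallelSum_add_parallelSum_le ha ha hu.1 hv.1
        rwa [parallelSum_self, add_comm a u, add_comm a v] at this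
    _ = ∫ x in a..b, ∫ y in a..b, parallelSum x y :=
        (integral_integral_eq_integral_integral_add_right _ a b).symm

end Interval

theorem IH_bounds (a b : ℝ) (ha : 0 < a) (hab : a < b) :
    (8 * (1 - Real.log 2) / 3) * ((a + b) / 2) <
      (2 / (b - a)^2) * (∫ x in a..b, ∫ y in a..b, x * y / (x + y)) ∧
    (2 / (b - a)^2) * (∫ x in a..b, ∫ y in a..b, x * y / (x + y)) < (a + b) / 2 := by
  have hc : 0 < (b - a) ^ 2 := pow_pos (sub_pos.2 hab) 2
  have hupper := integral_integral_parallelSum_lt ha.le hab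
  have hlower := le_integral_integral_parallelSum ha.le hab
  have hlog2 := Real.log_two_gt_d9
  unfold parallelSum at hupper hlower
  rw [div_mul_eq_mul_div (2 : ℝ), lt_div_iff₀ hc, div_lt_iff₀ hc]
  constructor
  · nlinarith [mul_pos ha hc]
  · linarith
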